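/- For every t ≥ 0 and every nonnegative integer k, the Laguerre function satisfies |φ_k(t)| = |e^{-t/2} L_k(t)| ≤ 1. -/

import Mathlib

open Real

/-- The `k`-th Laguerre polynomial `L_k(t) = ∑_{m=0}^{k} C(k,m) (-t)^m / m!`. -/
noncomputable def laguerreL (k : ℕ) (t : ℝ) : ℝ :=
  ∑ m ∈ Finset.range (k + 1), (k.choose m : ℝ) * (-t) ^ m / (m.factorial : ℝ)

/-- The Laguerre function `φ_k(t) = e^{-t/2} L_k(t)`. -/
noncomputable def laguerreFun (k : ℕ) (t : ℝ) : ℝ := Real.exp (-t / 2) * laguerreL k t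

namespace LagAux

open Polynomial MeasureTheory Filter Finset

/-- real Hermite polynomial (probabilists') -/
noncomputable def Hp (n : ℕ) : ℝ[X] := (Polynomial.hermite n).map (Int.castRingHom ℝ)

/-- Hermite polynomial as a function -/
noncomputable def He (n : ℕ) (x : ℝ) : ℝ := (Hp n).eval x

lemma Hp_zero : Hp 0 = 1 := by simp [Hp, Polynomial.hermite_zero]

lemma Hp_one : Hp 1 = X := by simp [Hp, Polynomial.hermite_one]

lemma Hp_succ (n : ℕ) : Hp (n + 1) = X * Hp n - derivative (Hp n) := by
  simp [Hp, Polynomial.hermite_succ, Polynomial.derivative_map]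

lemma derivative_Hp (n : ℕ) : derivative (Hp n) = C (n : ℝ) * Hp (n - 1) := by
  induction n with
  | zero => simp [Hp_zero]
  | succ k ih =>
    match k, ih with
    | 0, _ => simp [Hp_one, Hp_zero]
    | (k+1), ih =>
      rw [Hp_succ (k+1), derivative_sub, derivative_mul, derivative_X, one_mul, ih]
      rw [derivative_mul, derivative_C, zero_mul, zero_add]
      have hs : Hp (k + 1 + 1 - 1) = Hp (k+1) := rfl
      rw [hs, Hp_succ k]
      push_cast [map_add, map_natCast, map_one]
      ring
lemma He_mul_x (k : ℕ) (x : ℝ) :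
    x * He k x = He (k + 1) x + (k : ℝ) * He (k - 1) x := by
  have h := Hp_succ k
  have : (Hp (k+1)).eval x = x * (Hp k).eval x - ((k:ℝ) * (Hp (k-1)).eval x) := by
    rw [h, derivative_Hp k]; simp
  simp only [He, this]; ring

lemma integrable_polyG (p : ℝ[X]) :
    Integrable (fun x : ℝ => p.eval x * Real.exp (-(x ^ 2 / 2))) := by
  induction p using Polynomial.induction_on' with
  | add p q hp hq => simpa [add_mul] using hp.fun_add hq
  | monomial n a =>
    simp only [eval_monomial]
    have hint : Integrable (fun x : ℝ => Real.exp (-(4⁻¹ : ℝ) * x ^ 2)) :=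
      integrable_exp_neg_mul_sq (by norm_num)
    refine (hint.const_mul (|a| * n.factorial * Real.exp 1)).mono'
      (Continuous.aestronglyMeasurable (by continuity)) ?_
    filter_upwards with x
    have h1 : |x| ^ n ≤ n.factorial * Real.exp |x| := by
      have hs := Real.sum_le_exp_of_nonneg (abs_nonneg x) (n + 1)
      have hterm : |x| ^ n / n.factorial ≤ Real.exp |x| := by
        refine le_trans ?_ hs
        exact Finset.single_le_sum (f := fun i => |x| ^ i / i.factorial)
          (fun i _ => by positivity) (Finset.self_mem_range_succ n)
      rw [div_le_iff₀ (by positivity)] at hterm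
      linarith [hterm]
    have h2 : Real.exp (|x| - x ^ 2 / 2) ≤ Real.exp 1 * Real.exp (-(4⁻¹:ℝ) * x ^ 2) := by
      rw [← Real.exp_add]
      apply Real.exp_le_exp.2
      nlinarith [sq_nonneg (|x| - 2), sq_abs x]
    calc ‖a * x ^ n * Real.exp (-(x ^ 2 / 2))‖
        = |a| * (|x| ^ n * Real.exp (-(x ^ 2 / 2))) := by
          simp [abs_mul, abs_pow, Real.abs_exp, mul_assoc]
      _ ≤ |a| * ((n.factorial * Real.exp |x|) * Real.exp (-(x ^ 2 / 2))) := by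
          gcongr
      _ = |a| * n.factorial * Real.exp (|x| - x ^ 2 / 2) := by
          rw [mul_assoc, ← Real.exp_add]; ring_nf
      _ ≤ |a| * n.factorial * Real.exp 1 * Real.exp (-(4⁻¹:ℝ) * x ^ 2) := by
          rw [mul_assoc (|a| * ↑n.factorial)]
          gcongr

lemma tendsto_polyG_atTop (p : ℝ[X]) :
    Tendsto (fun x : ℝ => p.eval x * Real.exp (-(x ^ 2 / 2))) atTop (nhds 0) := by
  have hg : Tendsto (fun x : ℝ => (p * p + 1).eval x / Real.exp x) atTop (nhds 0) :=
    Polynomial.tendsto_div_exp_atTop (p * p + 1)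
  refine squeeze_zero_norm' ?_ hg
  filter_upwards [eventually_ge_atTop (2 : ℝ)] with x hx
  have h1 : Real.exp (-(x ^ 2 / 2)) ≤ Real.exp (-x) := by
    apply Real.exp_le_exp.2; nlinarith
  have h2 : |p.eval x| ≤ (p * p + 1).eval x := by
    simp only [eval_add, eval_mul, eval_one]
    nlinarith [sq_nonneg (|p.eval x| - 1), sq_abs (p.eval x)]
  have h3 : (0:ℝ) ≤ (p*p+1).eval x := by
    simp only [eval_add, eval_mul, eval_one]
    nlinarith [sq_nonneg (p.eval x)]
  calc ‖p.eval x * Real.exp (-(x ^ 2 / 2))‖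
      = |p.eval x| * Real.exp (-(x ^ 2 / 2)) := by
        simp [abs_mul, Real.abs_exp]
    _ ≤ (p * p + 1).eval x * Real.exp (-x) := by
        exact mul_le_mul h2 h1 (Real.exp_pos _).le h3
    _ = (p * p + 1).eval x / Real.exp x := by
        rw [Real.exp_neg]; ring

lemma tendsto_polyG_atBot (p : ℝ[X]) :
    Tendsto (fun x : ℝ => p.eval x * Real.exp (-(x ^ 2 / 2))) atBot (nhds 0) := by
  have h := (tendsto_polyG_atTop (p.comp (-X))).comp tendsto_neg_atBot_atTop
  refine h.congr fun x => ?_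
  simp [Function.comp, eval_comp, neg_sq]

lemma integral_deriv_polyG (p : ℝ[X]) :
    ∫ x : ℝ, ((derivative p).eval x - x * p.eval x) * Real.exp (-(x ^ 2 / 2)) = 0 := by
  set F : ℝ → ℝ := fun x => p.eval x * Real.exp (-(x ^ 2 / 2)) with hF
  set F' : ℝ → ℝ := fun x => ((derivative p).eval x - x * p.eval x) * Real.exp (-(x ^ 2 / 2))
    with hF'
  have hderiv : ∀ x : ℝ, HasDerivAt F (F' x) x := by
    intro x
    have h0 : HasDerivAt (fun x : ℝ => -(x ^ 2 / 2)) (-x) x := by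
      simpa using ((hasDerivAt_pow 2 x).div_const 2).fun_neg
    have h1 := (Polynomial.hasDerivAt p x).fun_mul h0.exp
    convert h1 using 1
    · rfl
    · rfl
    simp only [hF']; ring
  have hint : Integrable F' := by
    have := integrable_polyG (derivative p - X * p)
    simpa only [eval_sub, eval_mul, eval_X] using this
  have hIic : ∫ x in Set.Iic (0:ℝ), F' x = F 0 - 0 :=
    integral_Iic_of_hasDerivAt_of_tendsto' (fun x _ => hderiv x)
      hint.integrableOn (tendsto_polyG_atBot p)
  have hIoi : ∫ x in Set.Ioi (0:ℝ), F' x = 0 - F 0 :=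
    integral_Ioi_of_hasDerivAt_of_tendsto' (fun x _ => hderiv x)
      hint.integrableOn (tendsto_polyG_atTop p)
  have := intervalIntegral.integral_Iic_add_Ioi (b := (0:ℝ))
    hint.integrableOn hint.integrableOn
  rw [← this, hIic, hIoi]; ring

noncomputable def J (j k : ℕ) : ℝ := ∫ x : ℝ, He j x * He k x * Real.exp (-(x ^ 2 / 2))

lemma integrable_HeHeG (j k : ℕ) :
    Integrable (fun x : ℝ => He j x * He k x * Real.exp (-(x ^ 2 / 2))) := by
  simpa only [eval_mul, He] using integrable_polyG (Hp j * Hp k)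

lemma J_comm (j k : ℕ) : J j k = J k j := by
  unfold J; congr 1; funext x; ring

lemma J_step (j k : ℕ) : J (j + 1) k = (k : ℝ) * J j (k - 1) := by
  have h := integral_deriv_polyG (Hp j * Hp k)
  have hpt : ∀ x : ℝ, ((derivative (Hp j * Hp k)).eval x - x * (Hp j * Hp k).eval x)
      * Real.exp (-(x ^ 2 / 2))
      = (k : ℝ) * (He j x * He (k - 1) x * Real.exp (-(x ^ 2 / 2)))
        - He (j + 1) x * He k x * Real.exp (-(x ^ 2 / 2)) := by
    intro x
    have hx := He_mul_x j x
    simp only [derivative_mul, derivative_Hp, eval_add, eval_mul, eval_C, He] at *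
    linear_combination (-(Real.exp (-(x ^ 2 / 2))) * (Hp k).eval x) * hx
  have h2 : ∫ x : ℝ, ((k : ℝ) * (He j x * He (k - 1) x * Real.exp (-(x ^ 2 / 2)))
      - He (j + 1) x * He k x * Real.exp (-(x ^ 2 / 2))) = 0 := by
    rw [← h]; congr 1; funext x; exact (hpt x).symm
  rw [integral_sub ((integrable_HeHeG j (k-1)).const_mul _) (integrable_HeHeG (j+1) k),
    integral_const_mul] at h2
  unfold J; linarith [h2]

lemma J_zero_zero : J 0 0 = Real.sqrt (2 * π) := by
  have : J 0 0 = ∫ x : ℝ, Real.exp (-(2⁻¹:ℝ) * x ^ 2) := by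
    unfold J; congr 1; funext x
    simp [He, Hp_zero]; ring_nf
  rw [this, integral_gaussian]
  norm_num [mul_comm]

lemma J_diag (n : ℕ) : J n n = (n.factorial : ℝ) * Real.sqrt (2 * π) := by
  induction n with
  | zero => simpa using J_zero_zero
  | succ m ih =>
    rw [J_step]
    simp only [Nat.add_sub_cancel]
    rw [ih, Nat.factorial_succ]
    push_cast; ring

lemma J_gt {j k : ℕ} (h : k < j) : J j k = 0 := by
  induction k generalizing j with
  | zero =>
    obtain ⟨j', rfl⟩ : ∃ j', j = j' + 1 := ⟨j - 1, by omega⟩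
    rw [J_step]; simp
  | succ k ih =>
    obtain ⟨j', rfl⟩ : ∃ j', j = j' + 1 := ⟨j - 1, by omega⟩
    rw [J_step]
    simp only [Nat.add_sub_cancel]
    rw [ih (by omega)]
    ring

lemma J_off_diag {j k : ℕ} (h : j ≠ k) : J j k = 0 := by
  rcases lt_or_gt_of_ne h with hlt | hgt
  · rw [J_comm]; exact J_gt hlt
  · exact J_gt hgt

lemma He_add (n : ℕ) (x b : ℝ) :
    He n (x + b) = ∑ k ∈ range (n + 1), (n.choose k : ℝ) * b ^ (n - k) * He k x := by
  induction n using Nat.strong_induction_on with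
  | _ n ih =>
    match n with
    | 0 => simp [He, Hp_zero]
    | 1 =>
      simp [He, Hp_zero, Hp_one, Finset.sum_range_succ]
      ring
    | (m + 2) =>
      -- recurrence at x + b
      have hrec : He (m + 2) (x + b)
          = (x + b) * He (m + 1) (x + b) - ((m : ℝ) + 1) * He m (x + b) := by
        have := He_mul_x (m + 1) (x + b)
        simp only [Nat.add_sub_cancel] at this
        push_cast at this ⊢
        linarith [this]
      rw [hrec, ih (m + 1) (by omega), ih m (by omega)]
      -- expand (x+b) * sum
      have hxs : (x + b) * (∑ k ∈ range (m + 2), ((m+1).choose k : ℝ) * b ^ (m + 1 - k) * He k x)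
          = (∑ k ∈ range (m + 2), ((m+1).choose k : ℝ) * b ^ (m + 1 - k) * He (k + 1) x)
            + (∑ k ∈ range (m + 2), ((m+1).choose k : ℝ) * (k : ℝ) * b ^ (m + 1 - k) * He (k - 1) x)
            + (∑ k ∈ range (m + 2), ((m+1).choose k : ℝ) * b ^ (m + 2 - k) * He k x) := by
        rw [Finset.mul_sum, ← Finset.sum_add_distrib, ← Finset.sum_add_distrib]
        apply Finset.sum_congr rfl
        intro k hk
        have hxk := He_mul_x k x
        have hb : b ^ (m + 2 - k) = b * b ^ (m + 1 - k) := by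
          rw [← pow_succ']
          congr 1
          simp only [Finset.mem_range] at hk
          omega
        rw [hb]
        linear_combination (((m+1).choose k : ℝ) * b ^ (m + 1 - k)) * hxk
      -- middle term equals (m+1) * S m
      have hmid : (∑ k ∈ range (m + 2), ((m+1).choose k : ℝ) * (k : ℝ) * b ^ (m + 1 - k) * He (k - 1) x)
          = ((m : ℝ) + 1) * ∑ k ∈ range (m + 1), (m.choose k : ℝ) * b ^ (m - k) * He k x := by
        rw [Finset.sum_range_succ', Finset.mul_sum]
        simp only [Nat.cast_zero, mul_zero, zero_mul, add_zero, Nat.add_sub_cancel]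
        apply Finset.sum_congr rfl
        intro k hk
        have h2 : (m+1) * m.choose k = (m+1).choose (k+1) * (k+1) := Nat.add_one_mul_choose_eq m k
        have h3 : ((m : ℝ) + 1) * (m.choose k : ℝ) = ((m+1).choose (k+1) : ℝ) * ((k : ℝ) + 1) := by
          exact_mod_cast h2
        have e1 : m + 1 - (k + 1) = m - k := by omega
        rw [e1]
        have e2 : ((k + 1 : ℕ) : ℝ) = (k : ℝ) + 1 := by push_cast; ring
        rw [e2]
        linear_combination (-(b ^ (m - k) * He k x)) * h3
      rw [hxs, hmid]
      -- remains: Term1 + Term3 = S (m+2)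
      have hS : (∑ k ∈ range (m + 2 + 1), ((m+2).choose k : ℝ) * b ^ (m + 2 - k) * He k x)
          = (∑ k ∈ range (m + 2), ((m+1).choose k : ℝ) * b ^ (m + 1 - k) * He (k + 1) x)
            + (∑ k ∈ range (m + 2), ((m+1).choose k : ℝ) * b ^ (m + 2 - k) * He k x) := by
        rw [Finset.sum_range_succ' (fun k => ((m+2).choose k : ℝ) * b ^ (m + 2 - k) * He k x) (m+2)]
        -- LHS = ∑_{k<m+2} C(m+2,k+1) b^{m+1-k} He (k+1) + C(m+2,0) b^{m+2} He 0
        have hsplit : ∀ k ∈ range (m + 2),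
            ((m+2).choose (k+1) : ℝ) * b ^ (m + 2 - (k+1)) * He (k+1) x
            = ((m+1).choose k : ℝ) * b ^ (m + 1 - k) * He (k+1) x
              + ((m+1).choose (k+1) : ℝ) * b ^ (m + 1 - k) * He (k+1) x := by
          intro k hk
          have hcs : (m+2).choose (k+1) = (m+1).choose k + (m+1).choose (k+1) :=
            Nat.choose_succ_succ (m+1) k
          rw [hcs]
          have : (m + 2 - (k+1)) = m + 1 - k := by omega
          rw [this]
          push_cast
          ring
        rw [Finset.sum_congr rfl hsplit, Finset.sum_add_distrib]
        have hterm3 : (∑ k ∈ range (m + 2), ((m+1).choose k : ℝ) * b ^ (m + 2 - k) * He k x)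
            = (∑ k ∈ range (m + 1), ((m+1).choose (k+1) : ℝ) * b ^ (m + 1 - k) * He (k+1) x)
              + ((m+1).choose 0 : ℝ) * b ^ (m + 2) * He 0 x := by
          rw [Finset.sum_range_succ' (fun k => ((m+1).choose k : ℝ) * b ^ (m + 2 - k) * He k x) (m+1)]
          congr 1
          apply Finset.sum_congr rfl
          intro k hk
          have : (m + 2 - (k+1)) = m + 1 - k := by omega
          rw [this]
        have hlast : (∑ k ∈ range (m + 2), ((m+1).choose (k+1) : ℝ) * b ^ (m + 1 - k) * He (k+1) x)
            = ∑ k ∈ range (m + 1), ((m+1).choose (k+1) : ℝ) * b ^ (m + 1 - k) * He (k+1) x := by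
          rw [Finset.sum_range_succ]
          simp [Nat.choose_succ_self]
        rw [hlast, hterm3]
        simp only [Nat.sub_zero, Nat.choose_zero_right, Nat.cast_one]
        ring
      rw [hS]
      push_cast
      ring

lemma key (n : ℕ) (b : ℝ) :
    ∫ y : ℝ, He n (y + b) * He n (y - b) * Real.exp (-(y ^ 2 / 2))
      = (n.factorial : ℝ) * Real.sqrt (2 * π) * laguerreL n (b ^ 2) := by
  have h1 : ∀ y : ℝ, He n (y + b) * He n (y - b) * Real.exp (-(y ^ 2 / 2))
      = ∑ k ∈ range (n + 1), ∑ l ∈ range (n + 1),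
          ((n.choose k : ℝ) * b ^ (n - k) * ((n.choose l : ℝ) * (-b) ^ (n - l)))
            * (He k y * He l y * Real.exp (-(y ^ 2 / 2))) := by
    intro y
    have hyb : y - b = y + (-b) := by ring
    rw [He_add n y b, hyb, He_add n y (-b), Finset.sum_mul_sum, Finset.sum_mul]
    apply Finset.sum_congr rfl; intro k _
    rw [Finset.sum_mul]
    apply Finset.sum_congr rfl; intro l _
    ring
  calc (∫ y : ℝ, He n (y + b) * He n (y - b) * Real.exp (-(y ^ 2 / 2)))
      = ∫ y : ℝ, ∑ k ∈ range (n + 1), ∑ l ∈ range (n + 1),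
          ((n.choose k : ℝ) * b ^ (n - k) * ((n.choose l : ℝ) * (-b) ^ (n - l)))
            * (He k y * He l y * Real.exp (-(y ^ 2 / 2))) := by
        congr 1; funext y; exact h1 y
    _ = ∑ k ∈ range (n + 1), ∑ l ∈ range (n + 1),
          ((n.choose k : ℝ) * b ^ (n - k) * ((n.choose l : ℝ) * (-b) ^ (n - l))) * J k l := by
        rw [integral_finset_sum _ (fun k _ => integrable_finset_sum _
          (fun l _ => (integrable_HeHeG k l).const_mul _))]
        apply Finset.sum_congr rfl; intro k _
        rw [integral_finset_sum _ (fun l _ => (integrable_HeHeG k l).const_mul _)]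
        apply Finset.sum_congr rfl; intro l _
        exact integral_const_mul _ _
    _ = ∑ k ∈ range (n + 1),
          ((n.choose k : ℝ) * b ^ (n - k) * ((n.choose k : ℝ) * (-b) ^ (n - k))) * J k k := by
        apply Finset.sum_congr rfl; intro k hk
        apply Finset.sum_eq_single_of_mem k hk
        intro l _ hlk
        rw [J_off_diag (Ne.symm hlk)]; ring
    _ = (n.factorial : ℝ) * Real.sqrt (2 * π) * laguerreL n (b ^ 2) := by
        unfold laguerreL
        rw [Finset.mul_sum, ← Finset.sum_range_reflect]
        apply Finset.sum_congr rfl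
        intro j hj
        simp only [Finset.mem_range] at hj
        have hjn : j ≤ n := by omega
        have e1 : n - (n - j) = j := by omega
        have e2 : (n.choose (n - j) : ℝ) = (n.choose j : ℝ) := by
          rw [Nat.choose_symm hjn]
        have hcc : ((n.choose j : ℝ) * (j.factorial : ℝ)) * ((n - j).factorial : ℝ)
            = (n.factorial : ℝ) := by
          exact_mod_cast congrArg (fun z : ℕ => (z : ℝ))
            (Nat.choose_mul_factorial_mul_factorial hjn)
        have hbb : b ^ j * (-b) ^ j = (-(b ^ 2)) ^ j := by
          rw [← mul_pow]; congr 1; ring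
        simp only [Nat.add_sub_cancel]
        rw [e1, e2, J_diag (n - j)]
        have hfne : (j.factorial : ℝ) ≠ 0 := by
          exact_mod_cast j.factorial_ne_zero
        generalize Real.sqrt (2 * π) = s
        field_simp
        linear_combination (s * (n.choose j : ℝ) * (-(b ^ 2)) ^ j) * hcc
          + ((n.choose j : ℝ) ^ 2 * (j.factorial : ℝ) * s
              * ((n - j).factorial : ℝ)) * hbb


end LagAux

open LagAux MeasureTheory in
/-- For `t ≥ 0`, the Laguerre functions are bounded by `1` in absolute value. -/
theorem laguerre_abs_le_one (k : ℕ) (t : ℝ) (ht : 0 ≤ t) :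
    |laguerreFun k t| ≤ 1 := by
  set b := Real.sqrt t with hbdef
  have hb2 : b ^ 2 = t := Real.sq_sqrt ht
  set f : ℝ → ℝ := fun x => He k x * Real.exp (-(x ^ 2 / 4)) with hfdef
  set N : ℝ := (k.factorial : ℝ) * Real.sqrt (2 * π) with hN
  have hNpos : 0 < N := by
    apply mul_pos
    · exact_mod_cast k.factorial_pos
    · apply Real.sqrt_pos.2; positivity
  -- integrability of f^2
  have hf2eq : ∀ c : ℝ, ∀ x : ℝ, f (x - c) ^ 2
      = He k (x - c) * He k (x - c) * Real.exp (-((x - c) ^ 2 / 2)) := by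
    intro c x
    have e : Real.exp (-((x - c) ^ 2 / 4)) ^ 2 = Real.exp (-((x - c) ^ 2 / 2)) := by
      rw [pow_two, ← Real.exp_add]; congr 1; ring
    simp only [hfdef, mul_pow, e]
    ring
  have hf2eq0 : ∀ x : ℝ, f x ^ 2 = He k x * He k x * Real.exp (-(x ^ 2 / 2)) := by
    intro x
    have := hf2eq 0 x
    simpa using this
  have hintf2 : Integrable (fun x : ℝ => f x ^ 2) := by
    refine (integrable_HeHeG k k).congr ?_
    filter_upwards with x
    exact (hf2eq0 x).symm
  have hintg2 : Integrable (fun x : ℝ => f (x - 2 * b) ^ 2) :=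
    hintf2.comp_sub_right (2 * b)
  -- the correlation integral
  have hcorr : ∫ x : ℝ, f x * f (x - 2 * b) = N * laguerreFun k t := by
    have hshift : ∫ x : ℝ, f x * f (x - 2 * b)
        = ∫ y : ℝ, f (y + b) * f (y + b - 2 * b) := by
      exact (integral_add_right_eq_self (fun x : ℝ => f x * f (x - 2 * b)) b).symm
    rw [hshift]
    have hpt : ∀ y : ℝ, f (y + b) * f (y + b - 2 * b)
        = Real.exp (-(b ^ 2 / 2)) * (He k (y + b) * He k (y - b) * Real.exp (-(y ^ 2 / 2))) := by
      intro y
      simp only [hfdef]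
      have h2 : y + b - 2 * b = y - b := by ring
      rw [h2]
      have step : He k (y + b) * Real.exp (-((y + b) ^ 2 / 4))
          * (He k (y - b) * Real.exp (-((y - b) ^ 2 / 4)))
          = He k (y + b) * He k (y - b)
            * (Real.exp (-((y + b) ^ 2 / 4)) * Real.exp (-((y - b) ^ 2 / 4))) := by ring
      rw [step, ← Real.exp_add]
      have harg : -((y + b) ^ 2 / 4) + -((y - b) ^ 2 / 4) = -(b ^ 2 / 2) + -(y ^ 2 / 2) := by
        ring
      rw [harg, Real.exp_add]
      ring
    calc (∫ y : ℝ, f (y + b) * f (y + b - 2 * b))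
        = ∫ y : ℝ, Real.exp (-(b ^ 2 / 2))
            * (He k (y + b) * He k (y - b) * Real.exp (-(y ^ 2 / 2))) := by
          congr 1; funext y; exact hpt y
      _ = Real.exp (-(b ^ 2 / 2)) * (N * laguerreL k (b ^ 2)) := by
          rw [integral_const_mul, key k b, hN]
      _ = N * laguerreFun k t := by
          rw [hb2, laguerreFun]
          have : -(t / 2) = -t / 2 := by ring
          rw [this]; ring
  -- bound the correlation integral
  have hbound : |∫ x : ℝ, f x * f (x - 2 * b)| ≤ N := by
    have h1 : |∫ x : ℝ, f x * f (x - 2 * b)| ≤ ∫ x : ℝ, |f x * f (x - 2 * b)| := by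
      simpa only [Real.norm_eq_abs] using
        MeasureTheory.norm_integral_le_integral_norm (μ := volume)
          (fun x : ℝ => f x * f (x - 2 * b))
    have h2 : ∫ x : ℝ, |f x * f (x - 2 * b)|
        ≤ ∫ x : ℝ, (f x ^ 2 + f (x - 2 * b) ^ 2) / 2 := by
      apply integral_mono_of_nonneg
      · filter_upwards with x; positivity
      · exact (hintf2.add hintg2).div_const 2
      · filter_upwards with x
        have h := sq_nonneg (|f x| - |f (x - 2 * b)|)
        rw [abs_mul]
        nlinarith [sq_abs (f x), sq_abs (f (x - 2 * b))]
    have h3 : ∫ x : ℝ, (f x ^ 2 + f (x - 2 * b) ^ 2) / 2 = N := by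
      rw [integral_div, integral_add hintf2 hintg2]
      have h4 : ∫ x : ℝ, f (x - 2 * b) ^ 2 = ∫ x : ℝ, f x ^ 2 := by
        exact integral_sub_right_eq_self (fun x : ℝ => f x ^ 2) (2 * b)
      have h5 : ∫ x : ℝ, f x ^ 2 = N := by
        rw [hN, ← J_diag k, J]
        congr 1; funext x; exact hf2eq0 x
      rw [h4, h5]; ring
    linarith
  rw [hcorr] at hbound
  rw [abs_mul, abs_of_pos hNpos] at hbound
  nlinarith [hbound, hNpos, abs_nonneg (laguerreFun k t)]
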